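/- arXiv:2312.02643 — 2 statements merged into one kernel-verified Lean document; each statement's English description precedes it below -/
import Mathlib

section
/- Let (g_n) be a sequence of non-negative random variables, c ≥ 0 a constant, and p ≥ 1. If E|g_n^q − c^q| → 0 for every q ∈ (0, p], then E(|g_n − c|^p) → 0. -/
/-! For `p ≥ 1` and `a, c ≥ 0`, superadditivity of `x ↦ x ^ p` gives the pointwise bound
`|a - c| ^ p ≤ |a ^ p - c ^ p|`, so the hypothesis for the single exponent `q = p` already
dominates `E|g_n - c| ^ p`. -/

open MeasureTheory Filter

namespace Real

theorem abs_sub_rpow_le_abs_rpow_sub {a c p : ℝ} (ha : 0 ≤ a) (hc : 0 ≤ c) (hp : 1 ≤ p) :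
    |a - c| ^ p ≤ |a ^ p - c ^ p| := by
  wlog hca : c ≤ a generalizing a c
  · rw [abs_sub_comm, abs_sub_comm (a ^ p)]
    exact this hc ha (le_of_not_ge hca)
  have hsuper := add_rpow_le_rpow_add (sub_nonneg.2 hca) hc hp
  rw [sub_add_cancel] at hsuper
  have hmono : c ^ p ≤ a ^ p := rpow_le_rpow hc hca (by linarith)
  rw [abs_of_nonneg (sub_nonneg.2 hca), abs_of_nonneg (sub_nonneg.2 hmono)]
  linarith

end Real

namespace MeasureTheory

variable {Ω : Type*} [MeasurableSpace Ω] {μ : Measure Ω} [IsFiniteMeasure μ] {f : Ω → ℝ}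
  {c p : ℝ}

theorem Integrable.abs_rpow_sub_of_abs_sub_rpow (hf : AEStronglyMeasurable f μ) (hp : 0 < p)
    (hint : Integrable (fun ω => |f ω - c| ^ p) μ) :
    Integrable (fun ω => |f ω ^ p - c ^ p|) μ := by
  have hp' : ENNReal.ofReal p ≠ 0 := by simpa using hp
  have hmemLp : MemLp (fun ω => f ω - c) (ENNReal.ofReal p) μ := by
    refine (integrable_norm_rpow_iff (hf.sub aestronglyMeasurable_const) hp'
      ENNReal.ofReal_ne_top).1 ?_
    simpa [ENNReal.toReal_ofReal hp.le] using hint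
  have hf_rpow : Integrable (fun ω => |f ω| ^ p) μ := by
    have h := (hmemLp.add (memLp_const c)).integrable_norm_rpow hp' ENNReal.ofReal_ne_top
    simpa [ENNReal.toReal_ofReal hp.le] using h
  refine (Integrable.mono hf_rpow (hf.aemeasurable.pow_const p).aestronglyMeasurable
    (ae_of_all _ fun ω => ?_)).sub (integrable_const _) |>.abs
  rw [Real.norm_eq_abs, Real.norm_eq_abs, abs_of_nonneg (Real.rpow_nonneg (abs_nonneg _) p)]
  exact Real.abs_rpow_le_abs_rpow (f ω) p

theorem integral_abs_sub_rpow_le_integral_abs_rpow_sub (hf : AEStronglyMeasurable f μ)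
    (hf_nonneg : ∀ᵐ ω ∂μ, 0 ≤ f ω) (hc : 0 ≤ c) (hp : 1 ≤ p) :
    ∫ ω, |f ω - c| ^ p ∂μ ≤ ∫ ω, |f ω ^ p - c ^ p| ∂μ := by
  by_cases hint : Integrable (fun ω => |f ω - c| ^ p) μ
  · refine integral_mono_ae hint (hint.abs_rpow_sub_of_abs_sub_rpow hf (by linarith)) ?_
    filter_upwards [hf_nonneg] with ω hω
    exact Real.abs_sub_rpow_le_abs_rpow_sub hω hc hp
  · rw [integral_undef hint]
    exact integral_nonneg fun ω => abs_nonneg _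

end MeasureTheory

theorem stmt_0 {Ω : Type*} [MeasurableSpace Ω] (μ : Measure Ω) [IsProbabilityMeasure μ]
    (g : ℕ → Ω → ℝ) (hg_nonneg : ∀ n ω, 0 ≤ g n ω) (hg_meas : ∀ n, Measurable (g n))
    (c p : ℝ) (hc : 0 ≤ c) (hp : 1 ≤ p)
    (h : ∀ q ∈ Set.Ioc (0 : ℝ) p,
      Tendsto (fun n => ∫ ω, |g n ω ^ q - c ^ q| ∂μ) atTop (nhds 0)) :
    Tendsto (fun n => ∫ ω, |g n ω - c| ^ p ∂μ) atTop (nhds 0) :=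
  squeeze_zero (fun n => integral_nonneg fun ω => by positivity)
    (fun n => integral_abs_sub_rpow_le_integral_abs_rpow_sub (hg_meas n).aestronglyMeasurable
      (ae_of_all _ (hg_nonneg n)) hc hp)
    (h p ⟨by linarith, le_rfl⟩)
end

section
/- Let L(θ) = Σ_{i=1}^{l} a_i e^{−θ b_i} with all a_i > 0 and b_1 < b_2 < ... < b_l. Define Λ(θ) = log L(θ) − θ L'(θ)/L(θ). Then Λ(θ) → log a_1 as θ → +∞. -/
open Real Filter

/-- For `L(θ) = Σ_{i<l} a_i e^{-θ b_i}` with positive coefficients and strictly increasing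
exponents, `Λ(θ) = log L(θ) - θ L'(θ)/L(θ)` tends to `log a_1` as `θ → +∞`. -/
theorem stmt_9 (l : ℕ) (hl : 1 ≤ l) (a b : ℕ → ℝ)
    (ha : ∀ i < l, 0 < a i) (hb : ∀ i j, i < j → j < l → b i < b j) :
    Tendsto (fun θ : ℝ =>
        Real.log (∑ i ∈ Finset.range l, a i * Real.exp (-θ * b i))
          - θ * deriv (fun θ : ℝ => ∑ i ∈ Finset.range l, a i * Real.exp (-θ * b i)) θ
            / (∑ i ∈ Finset.range l, a i * Real.exp (-θ * b i)))
      atTop (nhds (Real.log (a 0))) := by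
  set g : ℝ → ℝ := fun θ => ∑ i ∈ Finset.range l, a i * Real.exp (-θ * (b i - b 0)) with hgdef
  set M : ℝ → ℝ := fun θ => ∑ i ∈ Finset.range l, a i * (Real.exp (-θ * (b i - b 0)) * (-1 * b i)) with hMdef
  set h : ℝ → ℝ := fun θ => ∑ i ∈ Finset.range l, a i * (b i - b 0) * (θ * Real.exp (-θ * (b i - b 0))) with hhdef
  have h0l : 0 < l := hl
  have ha0 : 0 < a 0 := ha 0 h0l
  have hgpos : ∀ θ, 0 < g θ := fun θ =>
    Finset.sum_pos (fun i hi => mul_pos (ha i (Finset.mem_range.mp hi)) (Real.exp_pos _))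
      ⟨0, Finset.mem_range.mpr h0l⟩
  -- derivative
  have hderiv : ∀ θ : ℝ, deriv (fun θ : ℝ => ∑ i ∈ Finset.range l, a i * Real.exp (-θ * b i)) θ
      = ∑ i ∈ Finset.range l, a i * (Real.exp (-θ * b i) * (-1 * b i)) := by
    intro θ
    have H : HasDerivAt (fun θ : ℝ => ∑ i ∈ Finset.range l, a i * Real.exp (-θ * b i))
        (∑ i ∈ Finset.range l, a i * (Real.exp (-θ * b i) * (-1 * b i))) θ := by
      apply HasDerivAt.fun_sum
      intro i _
      exact (((hasDerivAt_id θ).neg.mul_const (b i)).exp).const_mul (a i)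
    exact H.deriv
  -- factorizations
  have hfactor : ∀ θ : ℝ, (∑ i ∈ Finset.range l, a i * Real.exp (-θ * b i))
      = Real.exp (-θ * b 0) * g θ := by
    intro θ
    rw [hgdef, Finset.mul_sum]
    refine Finset.sum_congr rfl fun i _ => ?_
    have he : Real.exp (-θ * b i) = Real.exp (-θ * (b i - b 0)) * Real.exp (-θ * b 0) := by
      rw [← Real.exp_add]; ring_nf
    rw [he]; ring
  have hfactorN : ∀ θ : ℝ, (∑ i ∈ Finset.range l, a i * (Real.exp (-θ * b i) * (-1 * b i)))
      = Real.exp (-θ * b 0) * M θ := by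
    intro θ
    rw [hMdef, Finset.mul_sum]
    refine Finset.sum_congr rfl fun i _ => ?_
    have he : Real.exp (-θ * b i) = Real.exp (-θ * (b i - b 0)) * Real.exp (-θ * b 0) := by
      rw [← Real.exp_add]; ring_nf
    rw [he]; ring
  have hhM : ∀ θ : ℝ, h θ = -(θ * b 0 * g θ) - θ * M θ := by
    intro θ
    rw [hhdef, hgdef, hMdef, Finset.mul_sum, Finset.mul_sum, ← Finset.sum_neg_distrib,
      ← Finset.sum_sub_distrib]
    exact Finset.sum_congr rfl fun i _ => by ring
  -- rewrite the whole expression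
  have key : ∀ θ : ℝ,
      Real.log (g θ) + h θ / g θ =
      Real.log (∑ i ∈ Finset.range l, a i * Real.exp (-θ * b i))
          - θ * deriv (fun θ : ℝ => ∑ i ∈ Finset.range l, a i * Real.exp (-θ * b i)) θ
            / (∑ i ∈ Finset.range l, a i * Real.exp (-θ * b i)) := by
    intro θ
    rw [hderiv, hfactor, hfactorN, Real.log_mul (Real.exp_ne_zero _) (hgpos θ).ne',
      Real.log_exp, hhM]
    have hE : Real.exp (-θ * b 0) ≠ 0 := Real.exp_ne_zero _
    have hrw : θ * (Real.exp (-θ * b 0) * M θ) = Real.exp (-θ * b 0) * (θ * M θ) := by ring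
    rw [hrw, mul_div_mul_left _ _ hE, sub_div, neg_div, mul_div_assoc (θ * b 0),
      div_self (hgpos θ).ne', mul_one]
    ring
  -- limits
  have hexp0 : ∀ c : ℝ, 0 < c → Tendsto (fun θ : ℝ => Real.exp (-θ * c)) atTop (nhds 0) := by
    intro c hc
    apply Real.tendsto_exp_atBot.comp
    have : Tendsto (fun θ : ℝ => θ * c) atTop atTop := tendsto_id.atTop_mul_const hc
    have := tendsto_neg_atTop_atBot.comp this
    simpa [Function.comp_def, neg_mul] using this
  have hbi : ∀ i, 0 < i → i < l → 0 < b i - b 0 := fun i hi hil =>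
    sub_pos.mpr (hb 0 i hi hil)
  have hg : Tendsto g atTop (nhds (a 0)) := by
    have := tendsto_finset_sum (Finset.range l)
      (x := atTop) (f := fun (i : ℕ) (θ : ℝ) => a i * Real.exp (-θ * (b i - b 0)))
      (a := fun i => if i = 0 then a 0 else 0) ?_
    · have hsum : (∑ i ∈ Finset.range l, if i = 0 then a 0 else 0) = a 0 := by
        rw [Finset.sum_ite_eq' (Finset.range l) 0 (fun _ => a 0)]
        simp [Finset.mem_range, h0l]
      rwa [hsum] at this
    · intro i hi
      rcases Nat.eq_zero_or_pos i with rfl | hip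
      · simpa using tendsto_const_nhds (x := a 0) (f := atTop (α := ℝ))
      · have := (tendsto_const_nhds (x := a i) (f := atTop (α := ℝ))).mul
          (hexp0 _ (hbi i hip (Finset.mem_range.mp hi)))
        simpa [hip.ne'] using this
  have hh0 : Tendsto h atTop (nhds 0) := by
    have txe : Tendsto (fun x : ℝ => x * Real.exp (-x)) atTop (nhds 0) := by
      simpa using tendsto_pow_mul_exp_neg_atTop_nhds_zero 1
    have := tendsto_finset_sum (Finset.range l)
      (x := atTop) (f := fun (i : ℕ) (θ : ℝ) => a i * (b i - b 0) * (θ * Real.exp (-θ * (b i - b 0))))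
      (a := fun _ => 0) ?_
    · simp only [Finset.sum_const_zero] at this
      rw [hhdef]; exact this
    · intro i hi
      rcases Nat.eq_zero_or_pos i with rfl | hip
      · simpa using tendsto_const_nhds (x := (0:ℝ)) (f := atTop (α := ℝ))
      · have hc := hbi i hip (Finset.mem_range.mp hi)
        have hcomp : Tendsto (fun θ : ℝ => (θ * (b i - b 0)) * Real.exp (-(θ * (b i - b 0))))
            atTop (nhds 0) := txe.comp (tendsto_id.atTop_mul_const hc)
        have h2 : Tendsto (fun θ : ℝ => θ * Real.exp (-θ * (b i - b 0))) atTop (nhds 0) := by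
          have := hcomp.const_mul ((b i - b 0)⁻¹)
          rw [mul_zero] at this
          refine this.congr fun θ => ?_
          field_simp [hc.ne']
        have := (tendsto_const_nhds (x := a i * (b i - b 0)) (f := atTop (α := ℝ))).mul h2
        simpa using this
  have final : Tendsto (fun θ : ℝ => Real.log (g θ) + h θ / g θ) atTop
      (nhds (Real.log (a 0))) := by
    have hlog : Tendsto (fun θ : ℝ => Real.log (g θ)) atTop (nhds (Real.log (a 0))) :=
      ((Real.continuousAt_log ha0.ne').tendsto).comp hg
    have hdiv : Tendsto (fun θ : ℝ => h θ / g θ) atTop (nhds 0) := by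
      have := hh0.div hg ha0.ne'
      rw [zero_div] at this
      exact this
    simpa using hlog.add hdiv
  exact final.congr key
end
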